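/- arXiv:2504.16415 — 4 statements merged into one kernel-verified Lean document; each statement's English description precedes it below -/
import Mathlib

section
/- Average-reward Performance Difference: for a finite MDP with transition kernel P and reward r, and any two policies π, π' whose induced chains admit stationary distributions, J^π − J^{π'} = ∑_s d^π(s) ∑_a π(a|s) [Q^{π'}(s,a) − V^{π'}(s)], where J^π is the average reward of π, d^π its stationary state distribution, and Q^{π'}, V^{π'} are the relative state-action and state value functions of π' satisfying the average-reward Bellman equations. -/
/-- Average-reward performance difference lemma:
`J^π − J^{π'} = ∑_s d^π(s) ∑_a π(a|s) [Q^{π'}(s,a) − V^{π'}(s)]`,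
where `d^π` is the stationary distribution of the chain induced by `π`, and
`(J', V', Q')` satisfy the average-reward Bellman equations for `π'`. -/
theorem performance_difference {S A : Type*} [Fintype S] [Fintype A]
    (P : S → A → S → ℝ) (r : S → A → ℝ) (π π' : S → A → ℝ)
    (dπ : S → ℝ)
    (hdπ : ∀ s, 0 ≤ dπ s) (hdπ1 : ∑ s, dπ s = 1)
    (hπ : ∀ s a, 0 ≤ π s a) (hπ1 : ∀ s, ∑ a, π s a = 1)
    (hstat : ∀ s', ∑ s, dπ s * ∑ a, π s a * P s a s' = dπ s')
    (J' : ℝ) (V' : S → ℝ) (Q' : S → A → ℝ)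
    (hV : ∀ s, V' s = ∑ a, π' s a * Q' s a)
    (hQ : ∀ s a, Q' s a = r s a - J' + ∑ s', P s a s' * V' s') :
    (∑ s, dπ s * ∑ a, π s a * r s a) - J' =
      ∑ s, dπ s * ∑ a, π s a * (Q' s a - V' s) := by
  have expand : ∀ s, ∑ a, π s a * (Q' s a - V' s)
      = (∑ a, π s a * r s a) - J' + (∑ s', (∑ a, π s a * P s a s') * V' s') - V' s := by
    intro s
    simp only [hQ, mul_sub, mul_add, Finset.mul_sum, Finset.sum_add_distrib,
      Finset.sum_sub_distrib, ← Finset.sum_mul, hπ1 s, one_mul]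
    rw [Finset.sum_comm]
    congr 1
    congr 1
    apply Finset.sum_congr rfl; intro s' _
    rw [Finset.sum_mul]
    apply Finset.sum_congr rfl; intro a _; ring
  simp only [expand]
  have hd : ∀ s, dπ s * ((∑ a, π s a * r s a) - J' + (∑ s', (∑ a, π s a * P s a s') * V' s') - V' s)
      = dπ s * (∑ a, π s a * r s a) - dπ s * J' + (∑ s', dπ s * ((∑ a, π s a * P s a s') * V' s')) - dπ s * V' s := by
    intro s; rw [mul_sub, mul_add, mul_sub]; simp only [Finset.mul_sum]
  simp only [hd, Finset.sum_add_distrib, Finset.sum_sub_distrib, ← Finset.sum_mul, hdπ1]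
  rw [Finset.sum_comm]
  have hs : ∀ s', ∑ s, dπ s * ((∑ a, π s a * P s a s') * V' s') = dπ s' * V' s' := by
    intro s'
    have : ∀ s, dπ s * ((∑ a, π s a * P s a s') * V' s')
        = (dπ s * ∑ a, π s a * P s a s') * V' s' := by intro s; ring
    simp only [this, ← Finset.sum_mul, hstat]
  simp only [hs]
  ring
end

section
/- Let M_t = (S, A, P_t, r_t) and M_{t'} = (S, A, P_{t'}, r_{t'}) be two finite average-reward MDPs with optimal average rewards J_t^* and J_{t'}^* respectively, and suppose the optimal bias (relative value) vector v_{t'}^* of M_{t'} satisfies ‖v_{t'}^*‖_∞ ≤ U. Then J_t^* − J_{t'}^* ≤ ‖r_t − r_{t'}‖_∞ + U·‖P_t − P_{t'}‖_∞, where ‖P_t − P_{t'}‖_∞ = max_{s,a} ∑_{s'} |P_t(s'|s,a) − P_{t'}(s'|s,a)|. -/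
/-- Difference of optimal average rewards of two finite average-reward MDPs:
if `(Jt', v')` is a feasible solution of the LP for the MDP `(Pt', rt')` with
`‖v'‖∞ ≤ U`, and `Jt` is the optimal LP value for `(Pt, rt)` (i.e. it is below
any feasible value), then `Jt − Jt' ≤ ‖rt − rt'‖∞ + U ‖Pt − Pt'‖∞`. -/
theorem optimal_avg_reward_diff {S A : Type*} [Fintype S] [Fintype A]
    [Nonempty S] [Nonempty A]
    (Pt Pt' : S → A → S → ℝ) (rt rt' : S → A → ℝ)
    (Jt Jt' : ℝ) (v' : S → ℝ) (U : ℝ) (hU : ∀ s, |v' s| ≤ U)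
    (hOpt : ∀ (J : ℝ) (v : S → ℝ),
      (∀ s a, rt s a + ∑ s', Pt s a s' * v s' ≤ J + v s) → Jt ≤ J)
    (hFeas : ∀ s a, rt' s a + ∑ s', Pt' s a s' * v' s' ≤ Jt' + v' s)
    (Rb Pb : ℝ)
    (hRb : ∀ s a, |rt s a - rt' s a| ≤ Rb)
    (hPb : ∀ s a, ∑ s', |Pt s a s' - Pt' s a s'| ≤ Pb) :
    Jt - Jt' ≤ Rb + U * Pb := by
  have hU0 : 0 ≤ U := le_trans (abs_nonneg _) (hU (Classical.arbitrary S))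
  have key : Jt ≤ Jt' + Rb + U * Pb := by
    apply hOpt (Jt' + Rb + U * Pb) v'
    intro s a
    have h1 : rt s a ≤ rt' s a + Rb := by
      have := abs_le.mp (hRb s a); linarith [this.2]
    have h2 : ∑ s', Pt s a s' * v' s' ≤ (∑ s', Pt' s a s' * v' s') + U * Pb := by
      have hsum : ∑ s', (Pt s a s' - Pt' s a s') * v' s' ≤ U * Pb := by
        calc ∑ s', (Pt s a s' - Pt' s a s') * v' s'
            ≤ ∑ s', |Pt s a s' - Pt' s a s'| * U := by
              apply Finset.sum_le_sum
              intro i _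
              calc (Pt s a i - Pt' s a i) * v' i
                  ≤ |(Pt s a i - Pt' s a i) * v' i| := le_abs_self _
                _ = |Pt s a i - Pt' s a i| * |v' i| := abs_mul _ _
                _ ≤ |Pt s a i - Pt' s a i| * U :=
                    mul_le_mul_of_nonneg_left (hU i) (abs_nonneg _)
          _ = (∑ s', |Pt s a s' - Pt' s a s'|) * U := by rw [Finset.sum_mul]
          _ ≤ Pb * U := mul_le_mul_of_nonneg_right (hPb s a) hU0
          _ = U * Pb := mul_comm _ _
      have : ∑ s', Pt s a s' * v' s' - ∑ s', Pt' s a s' * v' s'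
          = ∑ s', (Pt s a s' - Pt' s a s') * v' s' := by
        rw [← Finset.sum_sub_distrib]; congr 1; ext i; ring
      linarith
    have := hFeas s a
    linarith
  linarith
end

section
/- For the TD(0) limiting-point equation in the average-reward setting: given a finite ergodic Markov chain with stationary state-action distribution D (diagonal matrix), reward vector r, average reward J = ∑_{s,a} D_{(s,a),(s,a)} r(s,a), and the matrix Ā = 𝔼[A(O)] defined from observations O = (s,a,s',a') by A(O) having −1 at ((s,a),(s,a)) and +1 at ((s,a),(s',a')) when (s,a) ≠ (s',a'), the relative Q-function q^π satisfies D(r − J·𝟏) + Ā q^π = 0, and consequently on the subspace E orthogonal to 𝟏, q^π_E = −(Ā)† D(r − J·𝟏) = (Ā)† D(J·𝟏 − r). -/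
open Finset Matrix

/-- The diagonal matrix `D = diag(d(s) π(a|s))` of the stationary state-action
distribution. -/
noncomputable def Dmat {S A : Type*} [Fintype S] [Fintype A] [DecidableEq S] [DecidableEq A]
    (d : S → ℝ) (π : S → A → ℝ) : Matrix (S × A) (S × A) ℝ :=
  Matrix.diagonal fun x => d x.1 * π x.1 x.2

/-- The probability of observing the transition `(s,a) → (s',a')` when the
first pair is drawn from the stationary distribution. -/
noncomputable def obsProb {S A : Type*} (d : S → ℝ) (π : S → A → ℝ)
    (P : S → A → S → ℝ) : (S × A) → (S × A) → ℝ :=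
  fun x y => d x.1 * π x.1 x.2 * P x.1 x.2 y.1 * π y.1 y.2

/-- The matrix `Ā = 𝔼[A(O)]`, where the observation matrix `A(O)` for
`O = (s,a,s',a')` with `(s,a) ≠ (s',a')` has `−1` at `((s,a),(s,a))` and `+1`
at `((s,a),(s',a'))`. -/
noncomputable def Abar {S A : Type*} [Fintype S] [Fintype A] [DecidableEq S] [DecidableEq A]
    (d : S → ℝ) (π : S → A → ℝ) (P : S → A → S → ℝ) : Matrix (S × A) (S × A) ℝ :=
  Matrix.of fun i j =>
    if i = j then -(∑ k ∈ Finset.univ.filter (· ≠ i), obsProb d π P i k)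
    else obsProb d π P i j

lemma Abar_mulVec {S A : Type*} [Fintype S] [Fintype A] [DecidableEq S] [DecidableEq A]
    (d : S → ℝ) (π : S → A → ℝ) (P : S → A → S → ℝ) (x : S × A → ℝ) (i : S × A) :
    (Abar d π P).mulVec x i
      = (∑ j, obsProb d π P i j * x j) - (∑ j, obsProb d π P i j) * x i := by
  have hsplit : ∀ f : S × A → ℝ, ∑ j, f j = f i + ∑ j ∈ Finset.univ.filter (· ≠ i), f j := by
    intro f
    rw [← Finset.sum_filter_add_sum_filter_not Finset.univ (· = i)]
    congr 1
    rw [Finset.filter_eq']; simp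
  simp only [Matrix.mulVec, dotProduct, Abar, Matrix.of_apply]
  rw [hsplit fun j => (if i = j then -(∑ k ∈ Finset.univ.filter (· ≠ i), obsProb d π P i k)
      else obsProb d π P i j) * x j]
  rw [hsplit fun j => obsProb d π P i j * x j, hsplit fun j => obsProb d π P i j]
  have h2 : ∀ j ∈ Finset.univ.filter (· ≠ i),
      (if i = j then -(∑ k ∈ Finset.univ.filter (· ≠ i), obsProb d π P i k)
      else obsProb d π P i j) * x j = obsProb d π P i j * x j := by
    intro j hj
    simp only [Finset.mem_filter] at hj
    rw [if_neg (Ne.symm hj.2)]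
  rw [Finset.sum_congr rfl h2, if_pos rfl]
  ring


/-- TD(0) limiting point in the average-reward setting: the relative
Q-function `q^π` satisfies `D(r − J·𝟏) + Ā q^π = 0`, and its projection onto
the subspace `E = 𝟏^⊥` equals `Ā† D(J·𝟏 − r)` where `Ā†` is the Moore–Penrose
pseudo-inverse of `Ā` (whose kernel is spanned by `𝟏`, by uniform ergodicity). -/
theorem td_limit_point {S A : Type*} [Fintype S] [Fintype A] [DecidableEq S] [DecidableEq A]
    (P : S → A → S → ℝ) (π : S → A → ℝ) (d : S → ℝ) (r : S × A → ℝ) (q : S × A → ℝ)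
    (hπ0 : ∀ s a, 0 ≤ π s a) (hπ1 : ∀ s, ∑ a, π s a = 1)
    (hP0 : ∀ s a s', 0 ≤ P s a s') (hP1 : ∀ s a, ∑ s', P s a s' = 1)
    (hd0 : ∀ s, 0 ≤ d s) (hd1 : ∑ s, d s = 1)
    (hstat : ∀ s', ∑ s, d s * ∑ a, π s a * P s a s' = d s')
    (J : ℝ) (hJ : J = ∑ x : S × A, d x.1 * π x.1 x.2 * r x)
    (hq : ∀ s a, q (s, a) = r (s, a) - J + ∑ s', P s a s' * ∑ a', π s' a' * q (s', a'))
    (Adag : Matrix (S × A) (S × A) ℝ)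
    (hp1 : Abar d π P * Adag * Abar d π P = Abar d π P)
    (hp2 : Adag * Abar d π P * Adag = Adag)
    (hp3 : (Abar d π P * Adag)ᵀ = Abar d π P * Adag)
    (hp4 : (Adag * Abar d π P)ᵀ = Adag * Abar d π P)
    (hker : ∀ x : S × A → ℝ, (Abar d π P).mulVec x = 0 ↔ ∃ c : ℝ, x = fun _ => c) :
    (Dmat d π).mulVec (fun i => r i - J) + (Abar d π P).mulVec q = 0 ∧
    (fun i => q i - (∑ j : S × A, q j) / (Fintype.card (S × A) : ℝ)) =
      Adag.mulVec ((Dmat d π).mulVec fun i => J - r i) := by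
  -- row sums of obsProb
  have hrow : ∀ i : S × A, ∑ j, obsProb d π P i j = d i.1 * π i.1 i.2 := by
    intro i
    rw [Fintype.sum_prod_type]
    simp only [obsProb]
    calc ∑ s' : S, ∑ a' : A, d i.1 * π i.1 i.2 * P i.1 i.2 s' * π s' a'
        = ∑ s' : S, d i.1 * π i.1 i.2 * P i.1 i.2 s' * ∑ a' : A, π s' a' := by
          simp [Finset.mul_sum]
      _ = d i.1 * π i.1 i.2 * ∑ s' : S, P i.1 i.2 s' := by
          simp only [hπ1, mul_one]; rw [← Finset.mul_sum]
      _ = _ := by rw [hP1, mul_one]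
  have hrowq : ∀ i : S × A, ∑ j, obsProb d π P i j * q j
      = d i.1 * π i.1 i.2 * ∑ s', P i.1 i.2 s' * ∑ a', π s' a' * q (s', a') := by
    intro i
    rw [Fintype.sum_prod_type]
    simp only [obsProb, Finset.mul_sum]
    congr 1; funext s'; congr 1; funext a'; ring
  -- part 1
  have h1 : (Dmat d π).mulVec (fun i => r i - J) + (Abar d π P).mulVec q = 0 := by
    funext i
    simp only [Pi.add_apply, Pi.zero_apply, Dmat, Matrix.mulVec_diagonal,
      Abar_mulVec, hrow, hrowq]
    have hq' := hq i.1 i.2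
    rw [Prod.mk.eta] at hq'
    have hb : r i - J + (∑ s', P i.1 i.2 s' * ∑ a', π s' a' * q (s', a')) - q i = 0 := by
      rw [hq']; ring
    calc d i.1 * π i.1 i.2 * (r i - J) +
          (d i.1 * π i.1 i.2 * (∑ s', P i.1 i.2 s' * ∑ a', π s' a' * q (s', a'))
            - d i.1 * π i.1 i.2 * q i)
        = d i.1 * π i.1 i.2 *
            (r i - J + (∑ s', P i.1 i.2 s' * ∑ a', π s' a' * q (s', a')) - q i) := by ring
      _ = 0 := by rw [hb, mul_zero]
  refine ⟨h1, ?_⟩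
  -- nonempty
  have hS : Nonempty S := by
    by_contra h
    rw [not_nonempty_iff] at h
    simp [Finset.univ_eq_empty] at hd1
  obtain ⟨s0⟩ := hS
  have hA : Nonempty A := by
    by_contra h
    rw [not_nonempty_iff] at h
    have := hπ1 s0
    simp [Finset.univ_eq_empty] at this
  obtain ⟨a0⟩ := hA
  haveI : Nonempty (S × A) := ⟨(s0, a0)⟩
  have hn : (0 : ℝ) < (Fintype.card (S × A) : ℝ) := by
    exact_mod_cast Fintype.card_pos
  -- Abar q = D (J - r)
  have hAq : (Abar d π P).mulVec q = (Dmat d π).mulVec (fun i => J - r i) := by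
    have := h1
    funext i
    have hi := congrFun this i
    simp only [Pi.add_apply, Pi.zero_apply, Dmat, Matrix.mulVec_diagonal] at hi ⊢
    linarith
  rw [← hAq, Matrix.mulVec_mulVec]
  set M := Adag * Abar d π P with hM
  -- M kills constants
  have hMc : ∀ c : ℝ, M.mulVec (fun _ => c) = 0 := by
    intro c
    rw [hM, ← Matrix.mulVec_mulVec, (hker _).mpr ⟨c, rfl⟩, Matrix.mulVec_zero]
  set n : ℝ := (Fintype.card (S × A) : ℝ)
  set c : ℝ := (∑ j : S × A, q j) / n with hc
  set u : S × A → ℝ := fun i => q i - c with hu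
  -- columns of M sum to zero
  have hcol : ∀ j, ∑ i, M i j = 0 := by
    intro j
    have h0 : Mᵀ.mulVec (fun _ => (1:ℝ)) = 0 := by
      rw [hM, hp4]; exact hMc 1
    have := congrFun h0 j
    simpa [Matrix.mulVec, dotProduct] using this
  -- sum of u is zero
  have hsumu : ∑ i, u i = 0 := by
    have h' : ∑ i, u i = (∑ j : S × A, q j) - n * c := by
      rw [hu]
      rw [Finset.sum_sub_distrib, Finset.sum_const, Finset.card_univ, nsmul_eq_mul]
    rw [h', hc, mul_comm, div_mul_cancel₀ _ (ne_of_gt hn), sub_self]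
  -- sum of M *ᵥ u is zero
  have hsumMu : ∑ i, M.mulVec u i = 0 := by
    simp only [Matrix.mulVec, dotProduct]
    rw [Finset.sum_comm]
    simp only [← Finset.sum_mul, hcol, zero_mul, Finset.sum_const_zero]
  -- w := u - M u is in kernel of Abar
  have hAbarMu : (Abar d π P).mulVec (M.mulVec u) = (Abar d π P).mulVec u := by
    rw [Matrix.mulVec_mulVec, hM, ← Matrix.mul_assoc, hp1]
  have hw : (Abar d π P).mulVec (u - M.mulVec u) = 0 := by
    rw [Matrix.mulVec_sub, hAbarMu, sub_self]
  obtain ⟨e, he⟩ := (hker _).mp hw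
  have hsumw : ∑ i, (u - M.mulVec u) i = 0 := by
    simp only [Pi.sub_apply, Finset.sum_sub_distrib, hsumu, hsumMu, sub_zero]
  rw [he] at hsumw
  simp only [Finset.sum_const, Finset.card_univ, nsmul_eq_mul] at hsumw
  have he0 : e = 0 := by
    rcases mul_eq_zero.mp hsumw with h | h
    · exact absurd h (ne_of_gt hn)
    · exact h
  have hMu : M.mulVec u = u := by
    funext i
    have h := congrFun he i
    rw [he0, Pi.sub_apply] at h
    linarith
  -- conclude
  have hqu : q = fun i => u i + c := by funext i; simp [hu]
  calc (fun i => q i - (∑ j : S × A, q j) / (Fintype.card (S × A) : ℝ)) = u := rfl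
    _ = M.mulVec u := hMu.symm
    _ = M.mulVec q := by
        rw [hqu]
        have : (fun i => u i + c) = u + fun _ => c := rfl
        rw [this, Matrix.mulVec_add, hMc, add_zero]
end

section
/- Solution set of the average-reward Bellman equation: for a finite MDP with uniformly ergodic induced chain under policy π, the set of solutions q to the Bellman equations q(s,a) = r(s,a) − J^π + ∑_{s'} P(s'|s,a) ∑_{a'} π(a'|s') q(s',a') is exactly {q_E + c·𝟏 : c ∈ ℝ}, where q_E is the unique solution orthogonal to 𝟏; in particular, for any two solutions q, q', the projections onto E = 𝟏^⊥ coincide: Π_E q = Π_E q', and ‖q − q'‖_∞ is attained by the translation along 𝟏, giving ‖Π_E[q − x]‖_∞ = ‖q_E − Π_E x‖_∞ for any vector x. -/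
/-- Orthogonal projection onto the subspace `E` orthogonal to the all-ones
vector (for the standard inner product on `ι → ℝ`). -/
noncomputable def projE {ι : Type*} [Fintype ι] (y : ι → ℝ) : ι → ℝ :=
  fun i => y i - (∑ j, y j) / (Fintype.card ι : ℝ)

/-- Solution set of the average-reward Bellman equation: under uniform
ergodicity (encoded by the kernel condition `hker`), the solutions of
`q = r − J𝟏 + K q` with `K (s,a) (s',a') = P(s'|s,a) π'(a'|s')` are exactly
`{q_E + c 𝟏 : c ∈ ℝ}` where `q_E` is the unique solution orthogonal to `𝟏`;
any two solutions have the same projection onto `E = 𝟏^⊥`; and for any vector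
`x`, `‖Π_E[q − x]‖∞ = ‖q_E − Π_E x‖∞`. -/
theorem bellman_solution_set {S A : Type*} [Fintype S] [Fintype A]
    (P : S → A → S → ℝ) (π : S → A → ℝ) (r : S × A → ℝ) (J : ℝ)
    (hπ0 : ∀ s a, 0 ≤ π s a) (hπ1 : ∀ s, ∑ a, π s a = 1)
    (hP0 : ∀ s a s', 0 ≤ P s a s') (hP1 : ∀ s a, ∑ s', P s a s' = 1)
    (hker : ∀ x : S × A → ℝ,
      (∀ i : S × A, x i = ∑ j : S × A, (P i.1 i.2 j.1 * π j.1 j.2) * x j) →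
        ∃ c : ℝ, ∀ i, x i = c)
    (qE : S × A → ℝ)
    (hqE : ∀ i : S × A, qE i = r i - J + ∑ j : S × A, (P i.1 i.2 j.1 * π j.1 j.2) * qE j)
    (hqE0 : ∑ i : S × A, qE i = 0)
    (q q' : S × A → ℝ)
    (hq : ∀ i : S × A, q i = r i - J + ∑ j : S × A, (P i.1 i.2 j.1 * π j.1 j.2) * q j)
    (hq' : ∀ i : S × A, q' i = r i - J + ∑ j : S × A, (P i.1 i.2 j.1 * π j.1 j.2) * q' j) :
    (∀ qq : S × A → ℝ,
      (∀ i : S × A, qq i = r i - J + ∑ j : S × A, (P i.1 i.2 j.1 * π j.1 j.2) * qq j) ↔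
        ∃ c : ℝ, ∀ i, qq i = qE i + c) ∧
    projE q = projE q' ∧
    (∀ x : S × A → ℝ, ‖projE (fun i => q i - x i)‖ = ‖(fun i => qE i - projE x i)‖) := by

  classical
  have hrow : ∀ i : S × A, ∑ j : S × A, (P i.1 i.2 j.1 * π j.1 j.2) = 1 := by
    intro i
    rw [Fintype.sum_prod_type]
    simp_rw [← Finset.mul_sum, hπ1, mul_one]
    exact hP1 i.1 i.2
  -- forward direction of the characterization
  have fwd : ∀ qq : S × A → ℝ,
      (∀ i : S × A, qq i = r i - J + ∑ j : S × A, (P i.1 i.2 j.1 * π j.1 j.2) * qq j) →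
        ∃ c : ℝ, ∀ i, qq i = qE i + c := by
    intro qq hqq
    have hk : ∀ i : S × A, (fun i => qq i - qE i) i
        = ∑ j : S × A, (P i.1 i.2 j.1 * π j.1 j.2) * (fun i => qq i - qE i) j := by
      intro i
      have h1 : ∑ j : S × A, (P i.1 i.2 j.1 * π j.1 j.2) * (qq j - qE j)
          = (∑ j : S × A, (P i.1 i.2 j.1 * π j.1 j.2) * qq j)
            - ∑ j : S × A, (P i.1 i.2 j.1 * π j.1 j.2) * qE j := by
        rw [← Finset.sum_sub_distrib]
        exact Finset.sum_congr rfl (fun j _ => by ring)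
      have h2 := hqq i
      have h3 := hqE i
      simp only [h1]
      linarith
    obtain ⟨c, hc⟩ := hker (fun i => qq i - qE i) hk
    exact ⟨c, fun i => by linarith [hc i]⟩
  have bwd : ∀ qq : S × A → ℝ, (∃ c : ℝ, ∀ i, qq i = qE i + c) →
      (∀ i : S × A, qq i = r i - J + ∑ j : S × A, (P i.1 i.2 j.1 * π j.1 j.2) * qq j) := by
    rintro qq ⟨c, hc⟩ i
    have h1 : ∑ j : S × A, (P i.1 i.2 j.1 * π j.1 j.2) * qq j
        = (∑ j : S × A, (P i.1 i.2 j.1 * π j.1 j.2) * qE j)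
          + (∑ j : S × A, (P i.1 i.2 j.1 * π j.1 j.2)) * c := by
      rw [Finset.sum_mul, ← Finset.sum_add_distrib]
      exact Finset.sum_congr rfl (fun j _ => by rw [hc j]; ring)
    rw [hc i, h1, hrow i]
    have h3 := hqE i
    linarith
  obtain ⟨c, hc⟩ := fwd q hq
  obtain ⟨c', hc'⟩ := fwd q' hq'
  by_cases hcard : (Fintype.card (S × A) : ℝ) = 0
  · -- empty case: the type is empty, everything trivial
    have : Fintype.card (S × A) = 0 := by exact_mod_cast hcard
    have he : IsEmpty (S × A) := Fintype.card_eq_zero_iff.mp this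
    refine ⟨fun qq => ⟨fwd qq, bwd qq⟩, funext fun i => he.elim i, fun x => ?_⟩
    congr 1
    exact funext fun i => he.elim i
  · have key : ∀ d : ℝ,
        (Fintype.card (S × A) : ℝ) * d / (Fintype.card (S × A) : ℝ) = d :=
      fun d => mul_div_cancel_left₀ d hcard
    have hsum : ∀ (f : S × A → ℝ) (d : ℝ), (∀ i, f i = qE i + d) →
        ∑ i : S × A, f i = (Fintype.card (S × A) : ℝ) * d := by
      intro f d hf
      rw [Finset.sum_congr rfl (fun i _ => hf i), Finset.sum_add_distrib, hqE0,
        Finset.sum_const, nsmul_eq_mul]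
      simp
    have hproj : ∀ (f : S × A → ℝ) (d : ℝ), (∀ i, f i = qE i + d) → projE f = qE := by
      intro f d hf
      funext i
      unfold projE
      rw [hsum f d hf, hf i, key d]
      ring
    refine ⟨fun qq => ⟨fwd qq, bwd qq⟩, by rw [hproj q c hc, hproj q' c' hc'], fun x => ?_⟩
    congr 1
    funext i
    unfold projE
    have hs : ∑ j : S × A, (q j - x j) = (Fintype.card (S × A) : ℝ) * c - ∑ j : S × A, x j := by
      rw [Finset.sum_sub_distrib, hsum q c hc]
    rw [hs]
    simp only [hc]
    rw [sub_div, key c]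
    ring
end
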